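/- Let T > 0 and let f, y₁, y₂ : [0,T] → ℝ be continuous with y₁(0) = y₂(0), f(0) + y₁(0) ≥ 0, and suppose y₁(t) − y₁(s) > y₂(t) − y₂(s) for all 0 ≤ s < t ≤ T. Then for all 0 ≤ s < t ≤ T one has m_{f+y₂}(t) − m_{f+y₂}(s) ≥ m_{f+y₁}(t) − m_{f+y₁}(s). -/

import Mathlib

/-!
Write `d = g₁ - g₂`, a nondecreasing function with `d 0 ≥ 0`. If `m_{g₁}` increases on `[s, t]`,
its value at `t` is `-g₁ r` for a maximiser `r ∈ (s, t]`. Then `m_{g₂}(t) ≥ -g₂ r = m_{g₁}(t) + d r`,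
while for `u ≤ s` we have `-g₂ u = -g₁ u + d u ≤ m_{g₁}(s) + d r`, so `m_{g₂}(s) ≤ m_{g₁}(s) + d r`;
subtracting gives the comparison of increments.
-/

open Set

/-- The Skorohod reflection term: `m_f(t) = sup_{0 ≤ s ≤ t} max(-f(s), 0)`. -/
noncomputable def mf (f : ℝ → ℝ) (t : ℝ) : ℝ :=
  sSup ((fun s => max (-f s) 0) '' Set.Icc 0 t)

section Reflection

variable {g g₁ g₂ : ℝ → ℝ} {s t u c : ℝ}

theorem bddAbove_reflection (hg : ContinuousOn g (Icc 0 t)) :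
    BddAbove ((fun s => max (-g s) 0) '' Icc 0 t) :=
  (isCompact_Icc.image_of_continuousOn (hg.neg.sup continuousOn_const)).bddAbove

theorem le_mf (hg : ContinuousOn g (Icc 0 t)) (hu : u ∈ Icc 0 t) : max (-g u) 0 ≤ mf g t :=
  le_csSup (bddAbove_reflection hg) (mem_image_of_mem _ hu)

theorem mf_nonneg (hg : ContinuousOn g (Icc 0 t)) (ht : 0 ≤ t) : 0 ≤ mf g t :=
  (le_max_right _ _).trans (le_mf hg ⟨le_rfl, ht⟩)

theorem mf_le (ht : 0 ≤ t) (h : ∀ u ∈ Icc 0 t, max (-g u) 0 ≤ c) : mf g t ≤ c :=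
  csSup_le ⟨_, mem_image_of_mem _ (⟨le_rfl, ht⟩ : (0 : ℝ) ∈ Icc 0 t)⟩
    (forall_mem_image.2 h)

theorem mf_mono (hg : ContinuousOn g (Icc 0 t)) (hs : 0 ≤ s) (hst : s ≤ t) :
    mf g s ≤ mf g t :=
  mf_le hs fun _ hu => le_mf hg ⟨hu.1, hu.2.trans hst⟩

theorem exists_mf_eq (hg : ContinuousOn g (Icc 0 t)) (ht : 0 ≤ t) :
    ∃ r ∈ Icc 0 t, mf g t = max (-g r) 0 := by
  obtain ⟨r, hr, hmax⟩ := isCompact_Icc.exists_isMaxOn (nonempty_Icc.2 ht)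
    (hg.neg.sup continuousOn_const)
  exact ⟨r, hr, le_antisymm (mf_le ht fun u hu => hmax hu) (le_mf hg hr)⟩

theorem mf_le_mf_add (hg₁ : ContinuousOn g₁ (Icc 0 s)) (hs : 0 ≤ s) (hc : 0 ≤ c)
    (h : ∀ u ∈ Icc 0 s, g₁ u - g₂ u ≤ c) : mf g₂ s ≤ mf g₁ s + c := by
  refine mf_le hs fun u hu => max_le ?_ (by linarith [mf_nonneg hg₁ hs])
  linarith [le_max_left (-g₁ u) 0, le_mf hg₁ hu, h u hu]

theorem mf_sub_le_mf_sub_of_monotoneOn (hg₁ : ContinuousOn g₁ (Icc 0 t))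
    (hg₂ : ContinuousOn g₂ (Icc 0 t)) (hd : MonotoneOn (fun u => g₁ u - g₂ u) (Icc 0 t))
    (hd₀ : 0 ≤ g₁ 0 - g₂ 0) (hs : 0 ≤ s) (hst : s ≤ t) :
    mf g₁ t - mf g₁ s ≤ mf g₂ t - mf g₂ s := by
  have ht : 0 ≤ t := hs.trans hst
  have hIcc : Icc 0 s ⊆ Icc 0 t := Icc_subset_Icc_right hst
  rcases le_or_gt (mf g₁ t) (mf g₁ s) with hle | hlt
  · linarith [mf_mono hg₂ hs hst]
  obtain ⟨r, hr, hmax⟩ := exists_mf_eq hg₁ ht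
  have hsr : s < r := by
    by_contra! hrs
    linarith [le_mf (hg₁.mono hIcc) ⟨hr.1, hrs⟩]
  have hpos : 0 < -g₁ r := by
    by_contra! hneg
    rw [max_eq_right hneg] at hmax
    linarith [mf_nonneg (hg₁.mono hIcc) hs]
  rw [max_eq_left hpos.le] at hmax
  have hdr : ∀ u ∈ Icc 0 s, g₁ u - g₂ u ≤ g₁ r - g₂ r := fun u hu =>
    hd (hIcc hu) hr (hu.2.trans hsr.le)
  have hupper := mf_le_mf_add (g₂ := g₂) (hg₁.mono hIcc) hs
    (hd₀.trans (hd ⟨le_rfl, ht⟩ hr hr.1)) hdr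
  linarith [le_max_left (-g₂ r) 0, le_mf hg₂ hr]

end Reflection

theorem stmt_5_general (T : ℝ) (f y₁ y₂ : ℝ → ℝ)
    (hf : ContinuousOn f (Set.Icc 0 T))
    (hy₁ : ContinuousOn y₁ (Set.Icc 0 T)) (hy₂ : ContinuousOn y₂ (Set.Icc 0 T))
    (h0 : y₁ 0 = y₂ 0)
    (hincr : ∀ s t : ℝ, 0 ≤ s → s < t → t ≤ T → y₂ t - y₂ s < y₁ t - y₁ s) :
    ∀ s t : ℝ, 0 ≤ s → s < t → t ≤ T →
      mf (fun u => f u + y₁ u) t - mf (fun u => f u + y₁ u) s ≤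
      mf (fun u => f u + y₂ u) t - mf (fun u => f u + y₂ u) s := by
  intro s t hs hst htT
  have hIcc : Icc 0 t ⊆ Icc 0 T := Icc_subset_Icc_right htT
  have hd : MonotoneOn (fun u => (f u + y₁ u) - (f u + y₂ u)) (Icc 0 t) := by
    intro a ha b hb hab
    rcases hab.eq_or_lt with rfl | hlt
    · exact le_rfl
    · linarith [hincr a b ha.1 hlt (hb.2.trans htT)]
  refine mf_sub_le_mf_sub_of_monotoneOn ((hf.add hy₁).mono hIcc) ((hf.add hy₂).mono hIcc) hd
    ?_ hs hst.le
  linarith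

/-- Comparison of the increments of the reflection terms: if the increments of `y₁`
strictly dominate those of `y₂`, then the increments of `m_{f+y₂}` dominate those of
`m_{f+y₁}` on `[0,T]`. -/
theorem stmt_5 (T : ℝ) (hT : 0 < T) (f y₁ y₂ : ℝ → ℝ)
    (hf : ContinuousOn f (Set.Icc 0 T))
    (hy₁ : ContinuousOn y₁ (Set.Icc 0 T)) (hy₂ : ContinuousOn y₂ (Set.Icc 0 T))
    (h0 : y₁ 0 = y₂ 0) (hinit : 0 ≤ f 0 + y₁ 0)
    (hincr : ∀ s t : ℝ, 0 ≤ s → s < t → t ≤ T → y₂ t - y₂ s < y₁ t - y₁ s) :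
    ∀ s t : ℝ, 0 ≤ s → s < t → t ≤ T →
      mf (fun u => f u + y₁ u) t - mf (fun u => f u + y₁ u) s ≤
      mf (fun u => f u + y₂ u) t - mf (fun u => f u + y₂ u) s :=
  stmt_5_general T f y₁ y₂ hf hy₁ hy₂ h0 hincr
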